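/- Let L = ℚ(a,b,c,d,e,k,l,m,n,p,q) be the field of rational functions over ℚ in the eleven indeterminates a,b,c,d,e,k,l,m,n,p,q, and work in L[x,y]. Set T₂ = a·x² + b·x·y + c·y² + d·x + e·y + 1, and let P = y·(k·y + l·x) + (p·y + q·x)·T₂ + (2a·x + b·y + d)·(−q·x² + (n−p)·x·y + m·y²) and Q = −x·(k·y + l·x) − (m·y + n·x)·T₂ + (b·x + 2c·y + e)·(−q·x² + (n−p)·x·y + m·y²) (a general member of Żołądek's family CR₁₆). Then the quadratic polynomial H = q·x² + (p−n)·x·y − m·y², which is a product of two linear forms defining two integral lines, is an algebraic integral curve of P dx + Q dy: H divides P·∂H/∂y − Q·∂H/∂x in L[x,y]. -/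
import Mathlib


open MvPolynomial

/-- The field `L = ℚ(a,b,c,d,e,k,l,m,n,p,q)` of rational functions over `ℚ` in eleven
indeterminates, realized as the fraction field of `ℚ[a,b,c,d,e,k,l,m,n,p,q]`. -/
abbrev L16 : Type := FractionRing (MvPolynomial (Fin 11) ℚ)

/-- The `i`-th indeterminate parameter (in the order `a,b,c,d,e,k,l,m,n,p,q`),
viewed as a constant of the polynomial ring `L[x,y]`. -/
noncomputable def ct (i : Fin 11) : MvPolynomial (Fin 2) L16 :=
  C (algebraMap (MvPolynomial (Fin 11) ℚ) L16 (X i))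

namespace CR16lines

noncomputable def a := ct 0
noncomputable def b := ct 1
noncomputable def c := ct 2
noncomputable def d := ct 3
noncomputable def e := ct 4
noncomputable def k := ct 5
noncomputable def l := ct 6
noncomputable def m := ct 7
noncomputable def n := ct 8
noncomputable def p := ct 9
noncomputable def q := ct 10

noncomputable def x : MvPolynomial (Fin 2) L16 := X 0
noncomputable def y : MvPolynomial (Fin 2) L16 := X 1

/-- `T₂ = a·x² + b·x·y + c·y² + d·x + e·y + 1`. -/
noncomputable def T₂ : MvPolynomial (Fin 2) L16 :=
  a * x^2 + b * x * y + c * y^2 + d * x + e * y + 1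

/-- The coefficient polynomial of Żołądek's family `CR₁₆`. -/
noncomputable def P : MvPolynomial (Fin 2) L16 :=
  y * (k * y + l * x) + (p * y + q * x) * T₂
    + (2 * a * x + b * y + d) * (-(q * x^2) + (n - p) * x * y + m * y^2)

/-- The coefficient polynomial of Żołądek's family `CR₁₆`. -/
noncomputable def Q : MvPolynomial (Fin 2) L16 :=
  -(x * (k * y + l * x)) - (m * y + n * x) * T₂
    + (b * x + 2 * c * y + e) * (-(q * x^2) + (n - p) * x * y + m * y^2)

/-- The quadratic polynomial `H = q·x² + (p−n)·x·y − m·y²`, a product of two linear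
forms defining Żołądek's two integral lines for the family `CR₁₆`. -/
noncomputable def H : MvPolynomial (Fin 2) L16 :=
  q * x^2 + (p - n) * x * y - m * y^2

/-- **The pair of lines `H = 0` is an algebraic integral curve of the general member of
Żołądek's family `CR₁₆`**: `H` divides `P·H_y − Q·H_x` in `L[x,y]`. -/
theorem lines_are_integral_curve : H ∣ P * pderiv 1 H - Q * pderiv 0 H := by
  refine ⟨p + n + 2*l*x + 2*k*y + 2*e*q*x + 2*e*p*y + 2*d*n*x + 2*d*m*y
    + 4*c*q*x*y + 3*c*p*y^2 - c*n*y^2 + 2*b*q*x^2 + b*p*x*y + b*n*x*y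
    + 2*b*m*y^2 - a*p*x^2 + 3*a*n*x^2 + 4*a*m*x*y, ?_⟩
  have hHy : pderiv 1 H = (p - n) * x - 2 * m * y := by
    unfold H p n m q x y
    unfold ct
    simp [pderiv_mul, pderiv_X]
    ring
  have hHx : pderiv 0 H = 2 * q * x + (p - n) * y := by
    unfold H p n m q x y
    unfold ct
    simp [pderiv_mul, pderiv_X]
    ring
  rw [hHy, hHx]
  unfold P Q H T₂ a b c d e k l m n p q
  ring

end CR16lines
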